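/- The uniform mixture over all z ∈ {±1,±i}^d of the product states ρ_z = |Φ_z⟩⟨Φ_z| ⊗ |Φ_{z*}⟩⟨Φ_{z*}| equals I_{AB} + (1/d)|ψ⁺⟩⟨ψ⁺| − (1/d²) Σ_{j=1}^d |jj⟩⟨jj|. -/

import Mathlib

open Matrix Finset
open scoped ComplexOrder

noncomputable section

/-- Kronecker (tensor) product of two `d × d` complex matrices. -/
def kron {d : ℕ} (A B : Matrix (Fin d) (Fin d) ℂ) :
    Matrix (Fin d × Fin d) (Fin d × Fin d) ℂ :=
  Matrix.kroneckerMap (· * ·) A B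

/-- The action of `I ⊗ Λ` on a bipartite operator. -/
def applyRight {d : ℕ} (Λ : Matrix (Fin d) (Fin d) ℂ →ₗ[ℂ] Matrix (Fin d) (Fin d) ℂ)
    (ρ : Matrix (Fin d × Fin d) (Fin d × Fin d) ℂ) :
    Matrix (Fin d × Fin d) (Fin d × Fin d) ℂ :=
  fun p q => ∑ r : Fin d, ∑ s : Fin d,
    ρ (p.1, r) (q.1, s) * Λ (Matrix.single r s 1) p.2 q.2

/-- The outer product `|x⟩⟨x|`. -/
def outer {ι : Type*} (x : ι → ℂ) : Matrix ι ι ℂ :=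
  Matrix.vecMulVec x (star x)

/-- The swap operator `E = ∑ |ij⟩⟨ji|`. -/
def swapOp {d : ℕ} : Matrix (Fin d × Fin d) (Fin d × Fin d) ℂ :=
  fun p q => if p.1 = q.2 ∧ p.2 = q.1 then 1 else 0

/-- Partial transpose with respect to the second tensor factor. -/
def ptransB {d : ℕ} (ρ : Matrix (Fin d × Fin d) (Fin d × Fin d) ℂ) :
    Matrix (Fin d × Fin d) (Fin d × Fin d) ℂ :=
  fun p q => ρ (p.1, q.2) (q.1, p.2)

/-- `ρ̌ = (E ρ)^{T_B} E`. -/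
def check {d : ℕ} (ρ : Matrix (Fin d × Fin d) (Fin d × Fin d) ℂ) :
    Matrix (Fin d × Fin d) (Fin d × Fin d) ℂ :=
  ptransB (swapOp * ρ) * swapOp

/-- A bipartite state is faithful if `Λ ↦ (I ⊗ Λ)(ρ)` is injective. -/
def Faithful {d : ℕ} (ρ : Matrix (Fin d × Fin d) (Fin d × Fin d) ℂ) : Prop :=
  Function.Injective (fun Λ : Matrix (Fin d) (Fin d) ℂ →ₗ[ℂ] Matrix (Fin d) (Fin d) ℂ =>
    applyRight Λ ρ)

/-- A positive map: sends PSD matrices to PSD matrices. -/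
def PosMap {d : ℕ} (Λ : Matrix (Fin d) (Fin d) ℂ →ₗ[ℂ] Matrix (Fin d) (Fin d) ℂ) : Prop :=
  ∀ X : Matrix (Fin d) (Fin d) ℂ, X.PosSemidef → (Λ X).PosSemidef

/-- The cone `K⁺(ρ₀)` of operators `(I ⊗ Λ)(ρ₀)` with `Λ` a positive map. -/
def Kplus {d : ℕ} (ρ₀ : Matrix (Fin d × Fin d) (Fin d × Fin d) ℂ) :
    Set (Matrix (Fin d × Fin d) (Fin d × Fin d) ℂ) :=
  {σ | ∃ Λ, PosMap Λ ∧ σ = applyRight Λ ρ₀}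

/-- The maximally entangled vector `|ψ⁺⟩ = (1/√d) ∑ᵢ |ii⟩`. -/
def psiPlus {d : ℕ} : Fin d × Fin d → ℂ :=
  fun p => if p.1 = p.2 then ((1 / Real.sqrt d : ℝ) : ℂ) else 0

/-- The maximally entangled state `|ψ⁺⟩⟨ψ⁺|`. -/
def psiProj {d : ℕ} : Matrix (Fin d × Fin d) (Fin d × Fin d) ℂ :=
  outer psiPlus

/-- The maximally mixed state `(1/d²)·Id` on `C^d ⊗ C^d`. -/
def maxMixed {d : ℕ} : Matrix (Fin d × Fin d) (Fin d × Fin d) ℂ :=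
  ((1 / (d : ℝ) ^ 2 : ℝ) : ℂ) • (1 : Matrix (Fin d × Fin d) (Fin d × Fin d) ℂ)

/-- The vector `|Φ_z⟩ = (1/√d) ∑ⱼ zⱼ |j⟩`, where `zⱼ = i^(z j)` ranges over `{1, i, -1, -i}`. -/
def phiVec {d : ℕ} (z : Fin d → Fin 4) : Fin d → ℂ :=
  fun j => ((1 / Real.sqrt d : ℝ) : ℂ) * Complex.I ^ (z j : ℕ)

/-- The product state `ρ_z = |Φ_z⟩⟨Φ_z| ⊗ |Φ_{z*}⟩⟨Φ_{z*}|`. -/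
def rhoZ {d : ℕ} (z : Fin d → Fin 4) : Matrix (Fin d × Fin d) (Fin d × Fin d) ℂ :=
  kron (outer (phiVec z)) (outer (star ∘ phiVec z))

/-- The standard basis vector `|j⟩`. -/
def basisVec {d : ℕ} (j : Fin d) : Fin d → ℂ :=
  fun i => if i = j then 1 else 0

/-!
The `((a, b), (c, e))` entry of `ρ_z` is `d⁻² · i^(z a) i^(z e) / (i^(z b) i^(z c))`. Averaging over
`z`, the coordinates are independent uniform phases in `{1, i, -1, -i}`, so the average factorises
over `j` into character sums on `ℤ/4`, each of which vanishes unless `j` occurs as often in `{a, e}`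
as in `{b, c}`. As these multisets have fewer than four elements, the average is `d⁻²` when
`{a, e} = {b, c}` and `0` otherwise; inclusion–exclusion over the two ways of matching the pairs
splits this indicator into the identity, `|ψ⁺⟩⟨ψ⁺|` and `∑ⱼ |jj⟩⟨jj|` terms.
-/

namespace IsPrimitiveRoot

variable {K : Type*} [Field K] {ζ : K} {n : ℕ}

theorem pow_div_pow_eq_one_iff (hζ : IsPrimitiveRoot ζ n) (hn : n ≠ 0) (p q : ℕ) :
    ζ ^ p / ζ ^ q = 1 ↔ p ≡ q [MOD n] := by
  rw [← zpow_natCast, ← zpow_natCast, ← zpow_sub₀ (hζ.ne_zero hn), hζ.zpow_eq_one_iff_dvd,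
    Nat.ModEq.comm, Nat.modEq_iff_dvd]

theorem sum_fin_pow_div_pow (hζ : IsPrimitiveRoot ζ n) (p q : ℕ) :
    ∑ x : Fin n, (ζ ^ (x : ℕ)) ^ p / (ζ ^ (x : ℕ)) ^ q = if p ≡ q [MOD n] then (n : K) else 0 := by
  rcases eq_or_ne n 0 with rfl | hn
  · simp
  set ω := ζ ^ p / ζ ^ q
  have hterm (x : ℕ) : (ζ ^ x) ^ p / (ζ ^ x) ^ q = ω ^ x := by
    rw [div_pow, ← pow_mul, ← pow_mul, pow_mul', pow_mul' ζ x q]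
  simp only [hterm]
  rw [Fin.sum_univ_eq_sum_range (ω ^ ·)]
  split_ifs with hpq
  · simp [ω, (hζ.pow_div_pow_eq_one_iff hn p q).mpr hpq]
  · have hωn : ω ^ n = 1 := by rw [← hterm, hζ.pow_eq_one, one_pow, one_pow, div_one]
    have hgeom := geom_sum_mul ω n
    rw [hωn, sub_self] at hgeom
    exact (mul_eq_zero.mp hgeom).resolve_right
      (sub_ne_zero.mpr ((hζ.pow_div_pow_eq_one_iff hn p q).not.mpr hpq))

theorem sum_prod_map_div_prod_map {ι : Type*} [Fintype ι] [DecidableEq ι]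
    (hζ : IsPrimitiveRoot ζ n) (s t : Multiset ι) :
    ∑ z : ι → Fin n, (s.map fun i => ζ ^ (z i : ℕ)).prod / (t.map fun i => ζ ^ (z i : ℕ)).prod
      = if ∀ j, s.count j ≡ t.count j [MOD n] then (n : K) ^ Fintype.card ι else 0 := by
  have hprod (u : ι → K) (m : Multiset ι) : (m.map u).prod = ∏ j, u j ^ m.count j := by
    rw [Finset.prod_multiset_map_count]
    exact Finset.prod_subset (Finset.subset_univ _)
      fun j _ hj => by rw [Multiset.count_eq_zero.mpr (by simpa using hj), pow_zero]
  simp only [hprod, ← Finset.prod_div_distrib]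
  rw [← Fintype.prod_sum
    fun j (x : Fin n) => (ζ ^ (x : ℕ)) ^ s.count j / (ζ ^ (x : ℕ)) ^ t.count j]
  simp only [hζ.sum_fin_pow_div_pow, Fintype.prod_ite_zero, Finset.prod_const, Finset.card_univ]

end IsPrimitiveRoot

theorem Multiset.forall_count_modEq_iff_eq {ι : Type*} [DecidableEq ι] {s t : Multiset ι} {n : ℕ}
    (hs : Multiset.card s < n) (ht : Multiset.card t < n) :
    (∀ j, s.count j ≡ t.count j [MOD n]) ↔ s = t := by
  rw [Multiset.ext]
  refine forall_congr' fun j => ?_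
  rw [Nat.ModEq, Nat.mod_eq_of_lt ((s.count_le_card j).trans_lt hs),
    Nat.mod_eq_of_lt ((t.count_le_card j).trans_lt ht)]

theorem Multiset.pair_eq_pair_iff {α : Type*} {a b c e : α} :
    ({a, b} : Multiset α) = {c, e} ↔ a = c ∧ b = e ∨ a = e ∧ b = c := by
  simp only [Multiset.insert_eq_cons, Multiset.cons_eq_cons, Multiset.singleton_eq_cons_iff,
    Multiset.singleton_inj]
  grind

open Complex ComplexConjugate

theorem ofReal_one_div_sqrt_sq (d : ℕ) : ((1 / Real.sqrt d : ℝ) : ℂ) ^ 2 = 1 / d := by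
  rw [← ofReal_pow, div_pow, Real.sq_sqrt d.cast_nonneg]
  push_cast
  ring

theorem conj_I_pow (k : ℕ) : conj (I ^ k) = (I ^ k)⁻¹ := by
  rw [map_pow, conj_I, ← inv_I, inv_pow]

section Entries

variable {d : ℕ}

theorem rhoZ_apply (z : Fin d → Fin 4) (a b c e : Fin d) :
    rhoZ z (a, b) (c, e)
      = (1 / d) ^ 2 * (I ^ (z a : ℕ) * I ^ (z e : ℕ) / (I ^ (z b : ℕ) * I ^ (z c : ℕ))) := by
  simp only [rhoZ, kron, kroneckerMap_apply, outer, vecMulVec_apply, Function.comp_apply,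
    Pi.star_apply, star_star]
  simp only [phiVec, Complex.star_def, map_mul, conj_ofReal, conj_I_pow]
  rw [← ofReal_one_div_sqrt_sq]
  ring

theorem mixture_rhoZ_apply (a b c e : Fin d) :
    (((1 / 4 ^ d : ℝ) : ℂ) • ∑ z, rhoZ z) (a, b) (c, e)
      = if ({a, e} : Multiset (Fin d)) = {b, c} then (1 / d ^ 2 : ℂ) else 0 := by
  have hsum := isPrimitiveRoot_I.sum_prod_map_div_prod_map {a, e} {b, c}
  simp only [Multiset.forall_count_modEq_iff_eq (s := {a, e}) (t := {b, c}) (n := 4)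
    (by simp) (by simp)] at hsum
  simp only [Multiset.insert_eq_cons, Multiset.map_cons, Multiset.map_singleton,
    Multiset.prod_cons, Multiset.prod_singleton] at hsum ⊢
  simp only [Matrix.smul_apply, Matrix.sum_apply, rhoZ_apply, ← Finset.mul_sum, hsum,
    Fintype.card_fin, smul_eq_mul]
  have h4 : (4 : ℂ) ^ d ≠ 0 := pow_ne_zero d four_ne_zero
  split_ifs
  · push_cast
    field_simp
  · simp

theorem maxMixed_apply (p q : Fin d × Fin d) :
    maxMixed p q = if p = q then (1 / d ^ 2 : ℂ) else 0 := by
  simp [maxMixed, Matrix.one_apply]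

theorem psiProj_apply (a b c e : Fin d) :
    psiProj (a, b) (c, e) = if a = b ∧ c = e then (1 / d : ℂ) else 0 := by
  simp only [psiProj, outer, vecMulVec_apply, Pi.star_apply, psiPlus, apply_ite star, star_zero,
    Complex.star_def, conj_ofReal, ite_mul, mul_ite, mul_zero, zero_mul, ← sq,
    ofReal_one_div_sqrt_sq]
  grind

theorem sum_kron_outer_basisVec_apply (a b c e : Fin d) :
    (∑ j, kron (outer (basisVec j)) (outer (basisVec j))) (a, b) (c, e)
      = if a = b ∧ a = c ∧ a = e then 1 else 0 := by
  simp only [kron, outer, Matrix.sum_apply, kroneckerMap_apply, vecMulVec_apply, basisVec,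
    Pi.star_apply, RCLike.star_def, MonoidWithZeroHom.map_ite_one_zero, mul_ite, mul_one,
    mul_zero, sum_ite_eq, mem_univ, ↓reduceIte]
  grind

end Entries

theorem uniform_mixture_rhoZ_general {d : ℕ} :
    ((1 / 4 ^ d : ℝ) : ℂ) • ∑ z : Fin d → Fin 4, rhoZ z
      = maxMixed (d := d) + ((1 / (d : ℝ) : ℝ) : ℂ) • psiProj (d := d)
        - ((1 / (d : ℝ) ^ 2 : ℝ) : ℂ) •
            ∑ j : Fin d, kron (outer (basisVec j)) (outer (basisVec j)) := by
  ext ⟨a, b⟩ ⟨c, e⟩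
  rw [Matrix.sub_apply, Matrix.add_apply, mixture_rhoZ_apply, maxMixed_apply, Matrix.smul_apply,
    psiProj_apply, Matrix.smul_apply, sum_kron_outer_basisVec_apply]
  simp only [Multiset.pair_eq_pair_iff, Prod.mk.injEq, smul_eq_mul]
  push_cast
  split_ifs <;> grind

/-- the uniform mixture of the states `ρ_z`. -/
theorem uniform_mixture_rhoZ {d : ℕ} (hd : 0 < d) :
    ((1 / 4 ^ d : ℝ) : ℂ) • ∑ z : Fin d → Fin 4, rhoZ z
      = maxMixed (d := d) + ((1 / (d : ℝ) : ℝ) : ℂ) • psiProj (d := d)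
        - ((1 / (d : ℝ) ^ 2 : ℝ) : ℂ) •
            ∑ j : Fin d, kron (outer (basisVec j)) (outer (basisVec j)) :=
  uniform_mixture_rhoZ_general
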